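/- arXiv:1911.00502 — 3 statements merged into one kernel-verified Lean document; each statement's English description precedes it below -/
import Mathlib

section
/- Let q : ℝ^d × ℝ → ℝ be continuously differentiable and strictly positive, let f : ℝ^d × ℝ → ℝ^d be continuously differentiable, and suppose q satisfies the continuity equation ∂q/∂t(x,t) = −div_x(q(x,t)·f(x,t)) for all (x,t). If x : ℝ → ℝ^d is differentiable with x'(t) = f(x(t), t) for all t, then for every t the function t ↦ log q(x(t), t) is differentiable with derivative equal to −(div_x f)(x(t), t), where div_x f = Σᵢ ∂fᵢ/∂xᵢ. -/
/-!
Along a trajectory, the chain rule gives `d/dt q(x(t), t) = ∇ₓq · f + ∂ₜq`. By the product rule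
`div(q f) = ∇ₓq · f + q div f`, so the continuity equation turns this into `-q div f`; dividing by
`q > 0` gives the derivative of `log q`.
-/

/-- Divergence in the spatial variable of a time-dependent vector field on ℝ^d:
`div_x v (x, t) = Σᵢ ∂vᵢ/∂xᵢ (x, t)`. -/
noncomputable def spatialDiv {d : ℕ} (v : (Fin d → ℝ) × ℝ → (Fin d → ℝ))
    (x : Fin d → ℝ) (t : ℝ) : ℝ :=
  ∑ i, fderiv ℝ (fun y : Fin d → ℝ => v (y, t) i) x (Pi.single i 1)

theorem ContinuousLinearMap.apply_eq_sum_mul_single {ι : Type*} [Fintype ι] [DecidableEq ι]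
    (ℓ : (ι → ℝ) →L[ℝ] ℝ) (v : ι → ℝ) : ℓ v = ∑ i, v i * ℓ (Pi.single i 1) := by
  conv_lhs => rw [← Finset.univ_sum_single v, map_sum]
  refine Finset.sum_congr rfl fun i _ => ?_
  rw [← smul_eq_mul, ← map_smul, ← Pi.single_smul', smul_eq_mul, mul_one]

section Slices

variable {E F : Type*} [NormedAddCommGroup E] [NormedSpace ℝ E]
  [NormedAddCommGroup F] [NormedSpace ℝ F] {q : E × ℝ → F} {y : E} {t : ℝ}

theorem fderiv_slice_left_apply (hq : DifferentiableAt ℝ q (y, t)) (v : E) :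
    fderiv ℝ (fun z => q (z, t)) y v = fderiv ℝ q (y, t) (v, 0) := by
  have h : HasFDerivAt (fun z => q (z, t)) ((fderiv ℝ q (y, t)).comp (.inl ℝ E ℝ)) y :=
    hq.hasFDerivAt.comp y (hasFDerivAt_prodMk_left y t)
  rw [h.fderiv]
  rfl

theorem deriv_slice_right (hq : DifferentiableAt ℝ q (y, t)) :
    deriv (fun s => q (y, s)) t = fderiv ℝ q (y, t) (0, 1) :=
  (hq.hasFDerivAt.comp_hasDerivAt t ((hasDerivAt_const t y).prodMk (hasDerivAt_id t))).deriv

theorem hasDerivAt_comp_prodMk_id {x : ℝ → E} {v : E} (hq : DifferentiableAt ℝ q (x t, t))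
    (hx : HasDerivAt x v t) :
    HasDerivAt (fun s => q (x s, s))
      (fderiv ℝ (fun z => q (z, t)) (x t) v + deriv (fun s => q (x t, s)) t) t := by
  have hpath : HasDerivAt (fun s => (x s, s)) (v, 1) t := hx.prodMk (hasDerivAt_id t)
  have h := hq.hasFDerivAt.comp_hasDerivAt_of_eq t hpath rfl
  rwa [fderiv_slice_left_apply hq, deriv_slice_right hq, ← map_add, Prod.mk_add_mk,
    add_zero, zero_add]

end Slices

theorem spatialDiv_smul {d : ℕ} {q : (Fin d → ℝ) × ℝ → ℝ} {f : (Fin d → ℝ) × ℝ → (Fin d → ℝ)}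
    {x : Fin d → ℝ} {t : ℝ} (hq : DifferentiableAt ℝ (fun y => q (y, t)) x)
    (hf : DifferentiableAt ℝ (fun y => f (y, t)) x) :
    spatialDiv (fun p => q p • f p) x t
      = fderiv ℝ (fun y => q (y, t)) x (f (x, t)) + q (x, t) * spatialDiv f x t := by
  have hfi (i : Fin d) : DifferentiableAt ℝ (fun y => f (y, t) i) x :=
    differentiableAt_pi.mp hf i
  rw [ContinuousLinearMap.apply_eq_sum_mul_single, spatialDiv, spatialDiv, Finset.mul_sum,
    ← Finset.sum_add_distrib]
  refine Finset.sum_congr rfl fun i _ => ?_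
  simp only [Pi.smul_apply, smul_eq_mul]
  rw [fderiv_fun_mul hq (hfi i)]
  simp only [add_apply, smul_apply, smul_eq_mul]
  ring

/-- If a strictly positive `C¹` density `q` satisfies the continuity equation
`∂q/∂t = −div_x (q f)` for a `C¹` velocity field `f`, and `x(·)` is a trajectory of the flow,
then `t ↦ log q(x(t), t)` is differentiable with derivative `−(div_x f)(x(t), t)`. -/
theorem log_density_material_derivative {d : ℕ}
    (q : (Fin d → ℝ) × ℝ → ℝ) (f : (Fin d → ℝ) × ℝ → (Fin d → ℝ))
    (hq : ContDiff ℝ 1 q) (hqpos : ∀ p, 0 < q p)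
    (hf : ContDiff ℝ 1 f)
    (hcont : ∀ (x : Fin d → ℝ) (t : ℝ),
      deriv (fun s => q (x, s)) t
        = -(spatialDiv (fun p => q p • f p) x t))
    (x : ℝ → (Fin d → ℝ)) (hx : ∀ t, HasDerivAt x (f (x t, t)) t) :
    ∀ t : ℝ, HasDerivAt (fun s => Real.log (q (x s, s)))
      (-(spatialDiv f (x t) t)) t := by
  intro t
  have hqd := hq.differentiable one_ne_zero
  have hmaterial : HasDerivAt (fun s => q (x s, s)) (-(q (x t, t) * spatialDiv f (x t) t)) t := by
    refine (hasDerivAt_comp_prodMk_id (hqd _) (hx t)).congr_deriv ?_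
    have hslice : Differentiable ℝ fun y : Fin d → ℝ => (y, t) :=
      differentiable_id.prodMk (differentiable_const t)
    rw [hcont, spatialDiv_smul (hqd.comp hslice _) ((hf.differentiable one_ne_zero).comp hslice _)]
    ring
  refine (hmaterial.log (hqpos _).ne').congr_deriv ?_
  field_simp [(hqpos (x t, t)).ne']
end

section
/- Fix T ∈ ℕ, an initial state x₀ ∈ ℝ^d, differentiable maps g_t : ℝ^d × ℝ^k → ℝ^d for t = 0,…,T−1, a differentiable terminal loss L : ℝ^d → ℝ, and a differentiable running cost R : ℝ^k → ℝ with weight δ ≥ 0. For controls W = (W₀,…,W_{T−1}) ∈ (ℝ^k)^T define the states X₀ = x₀, X_{t+1} = g_t(X_t, W_t), the objective J(W) = L(X_T) + δ·Σ_{t=0}^{T−1} R(W_t), and the adjoint variables P_T = −∇L(X_T), P_t = (D_x g_t(X_t, W_t))ᵀ P_{t+1} for t = T−1,…,1. Then for each t, the partial gradient of J with respect to W_t equals −( (D_W g_t(X_t, W_t))ᵀ P_{t+1} − δ·∇R(W_t) ), i.e. ∇_{W_t} J = −∇_W H(t, X_t, P_{t+1}, W_t) where H(t, x, p, W) = p ·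 g_t(x, W) − δ R(W) is the discrete Hamiltonian. Consequently, replacing the maximization step of the method of successive approximations by a gradient ascent step on the Hamiltonian is the same as gradient descent on J. -/
/-!
Perturbing only `W_t` leaves the states `X_s`, `s ≤ t`, unchanged, so by the chain rule the
derivative of `X_T` with respect to `W_t` is `D_x g_{T-1} ∘ ⋯ ∘ D_x g_{t+1} ∘ D_W g_t`.
Applying its adjoint to `P_T = -∇L(X_T)` and absorbing one factor at a time through the adjoint
recursion `P_s = (D_x g_s)ᵀ P_{s+1}` leaves `(D_W g_t)ᵀ P_{t+1}`. Only the `t`-th term of the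
running cost depends on `W_t`, and it contributes `δ ∇R(W_t)`.
-/

open Finset Function

section Gradient

variable {F G : Type*} [NormedAddCommGroup F] [InnerProductSpace ℝ F] [CompleteSpace F]
  [NormedAddCommGroup G] [InnerProductSpace ℝ G] [CompleteSpace G]
  {f h : F → ℝ} {f' h' x : F}

theorem HasGradientAt.add (hf : HasGradientAt f f' x) (hh : HasGradientAt h h' x) :
    HasGradientAt (fun y => f y + h y) (f' + h') x := by
  rw [hasGradientAt_iff_hasFDerivAt, map_add]
  exact hf.hasFDerivAt.add hh.hasFDerivAt

theorem HasGradientAt.const_mul (c : ℝ) (hf : HasGradientAt f f' x) :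
    HasGradientAt (fun y => c * f y) (c • f') x := by
  rw [hasGradientAt_iff_hasFDerivAt, map_smul]
  exact hf.hasFDerivAt.const_mul c

theorem HasGradientAt.comp_hasFDerivAt {φ : G → F} {φ' : G →L[ℝ] F} {z : G}
    (hf : HasGradientAt f f' (φ z)) (hφ : HasFDerivAt φ φ' z) :
    HasGradientAt (f ∘ φ) (ContinuousLinearMap.adjoint φ' f') z := by
  have hdual : InnerProductSpace.toDual ℝ G (ContinuousLinearMap.adjoint φ' f')
      = (InnerProductSpace.toDual ℝ F f').comp φ' := by
    ext v
    simp only [InnerProductSpace.toDual_apply_apply, ContinuousLinearMap.adjoint_inner_left,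
      ContinuousLinearMap.comp_apply]
  rw [hasGradientAt_iff_hasFDerivAt, hdual]
  exact hf.hasFDerivAt.comp z hφ

theorem hasGradientAt_sum_update {ι : Type*} [DecidableEq ι] {R : F → ℝ} {W : ι → F} {i : ι}
    {s : Finset ι} (hi : i ∈ s) (hR : HasGradientAt R f' (W i)) :
    HasGradientAt (fun w => ∑ j ∈ s, R (update W i w j)) f' (W i) := by
  have hsplit : ∀ w, ∑ j ∈ s, R (update W i w j) = R w + ∑ j ∈ s.erase i, R (W j) := by
    intro w
    rw [← add_sum_erase _ _ hi, update_self]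
    congr 1
    exact sum_congr rfl fun j hj => by rw [update_of_ne (ne_of_mem_erase hj)]
  simp only [hsplit]
  rw [hasGradientAt_iff_hasFDerivAt] at hR ⊢
  exact hR.add_const _

end Gradient

theorem ContinuousLinearMap.adjoint_apply_eq_of_forward_backward
    {E F : Type*} [NormedAddCommGroup E] [InnerProductSpace ℝ E] [CompleteSpace E]
    [NormedAddCommGroup F] [InnerProductSpace ℝ F] [CompleteSpace F]
    {A : ℕ → F →L[ℝ] E} {B : ℕ → E →L[ℝ] E} {P : ℕ → E} {m n : ℕ} (hmn : m ≤ n)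
    (hA : ∀ s, m ≤ s → s < n → A (s + 1) = (B s).comp (A s))
    (hP : ∀ s, m ≤ s → s < n → P s = adjoint (B s) (P (s + 1))) :
    adjoint (A n) (P n) = adjoint (A m) (P m) := by
  induction n, hmn using Nat.le_induction with
  | base => rfl
  | succ n hmn ih =>
    rw [hA n hmn n.lt_succ_self, adjoint_comp, comp_apply, ← hP n hmn n.lt_succ_self]
    exact ih (fun s hs _ => hA s hs (by omega)) (fun s hs _ => hP s hs (by omega))

section Trajectory

variable {E F : Type*} {g : ℕ → E → F → E} {X : (ℕ → F) → ℕ → E} {x₀ : E} {W : ℕ → F}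
  {t : ℕ}

theorem trajectory_update_of_le (hX0 : ∀ V, X V 0 = x₀)
    (hXs : ∀ V s, X V (s + 1) = g s (X V s) (V s)) (w : F) {s : ℕ} (hs : s ≤ t) :
    X (update W t w) s = X W s := by
  induction s with
  | zero => rw [hX0, hX0]
  | succ s ih => rw [hXs, hXs, update_of_ne (by omega), ih (by omega)]

theorem trajectory_update_succ_self (hX0 : ∀ V, X V 0 = x₀)
    (hXs : ∀ V s, X V (s + 1) = g s (X V s) (V s)) (w : F) :
    X (update W t w) (t + 1) = g t (X W t) w := by
  rw [hXs, update_self, trajectory_update_of_le hX0 hXs w le_rfl]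

section Differentiable

variable [NormedAddCommGroup E] [NormedSpace ℝ E] [NormedAddCommGroup F] [NormedSpace ℝ F]

theorem differentiable_trajectory_update (hX0 : ∀ V, X V 0 = x₀)
    (hXs : ∀ V s, X V (s + 1) = g s (X V s) (V s))
    (hg : ∀ s, Differentiable ℝ (fun p : E × F => g s p.1 p.2)) (s : ℕ) :
    Differentiable ℝ (fun w => X (update W t w) s) := by
  induction s with
  | zero => simp only [hX0]; exact differentiable_const x₀
  | succ s ih =>
    by_cases hst : s = t
    · subst hst
      simp only [trajectory_update_succ_self hX0 hXs]
      exact (hg s).comp ((differentiable_const _).prodMk differentiable_id)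
    · simp only [hXs, update_of_ne hst]
      exact (hg s).comp (ih.prodMk (differentiable_const _))

theorem fderiv_trajectory_update_succ (hX0 : ∀ V, X V 0 = x₀)
    (hXs : ∀ V s, X V (s + 1) = g s (X V s) (V s))
    (hg : ∀ s, Differentiable ℝ (fun p : E × F => g s p.1 p.2)) {s : ℕ} (hts : t < s) :
    fderiv ℝ (fun w => X (update W t w) (s + 1)) (W t)
      = (fderiv ℝ (fun x => g s x (W s)) (X W s)).comp
          (fderiv ℝ (fun w => X (update W t w) s) (W t)) := by
  have hstep : (fun w => X (update W t w) (s + 1))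
      = (fun x => g s x (W s)) ∘ fun w => X (update W t w) s := by
    funext w
    rw [comp_apply, hXs, update_of_ne hts.ne']
  have hgx : DifferentiableAt ℝ (fun x => g s x (W s)) (X W s) :=
    ((hg s).comp (differentiable_id.prodMk (differentiable_const _))).differentiableAt
  rw [hstep, fderiv_comp (W t) (by rwa [update_eq_self])
    (differentiable_trajectory_update hX0 hXs hg s).differentiableAt, update_eq_self]

end Differentiable

theorem adjoint_fderiv_trajectory_update_apply [NormedAddCommGroup E] [InnerProductSpace ℝ E]
    [CompleteSpace E] [NormedAddCommGroup F] [InnerProductSpace ℝ F] [CompleteSpace F]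
    (hX0 : ∀ V, X V 0 = x₀) (hXs : ∀ V s, X V (s + 1) = g s (X V s) (V s))
    (hg : ∀ s, Differentiable ℝ (fun p : E × F => g s p.1 p.2)) {T : ℕ} (ht : t < T)
    {P : ℕ → E} (hPs : ∀ s < T, P s =
      ContinuousLinearMap.adjoint (fderiv ℝ (fun x => g s x (W s)) (X W s)) (P (s + 1))) :
    ContinuousLinearMap.adjoint (fderiv ℝ (fun w => X (update W t w) T) (W t)) (P T)
      = ContinuousLinearMap.adjoint (fderiv ℝ (fun w => g t (X W t) w) (W t)) (P (t + 1)) := by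
  rw [ContinuousLinearMap.adjoint_apply_eq_of_forward_backward
    (A := fun s => fderiv ℝ (fun w => X (update W t w) s) (W t)) ht
    (fun s hts _ => fderiv_trajectory_update_succ hX0 hXs hg hts) (fun s _ hsT => hPs s hsT)]
  simp only [trajectory_update_succ_self hX0 hXs]

end Trajectory

theorem discrete_pmp_gradient_general {dd kk T : ℕ}
    (x₀ : EuclideanSpace ℝ (Fin dd))
    (g : ℕ → EuclideanSpace ℝ (Fin dd) → EuclideanSpace ℝ (Fin kk) → EuclideanSpace ℝ (Fin dd))
    (hg : ∀ t, Differentiable ℝ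
      (fun p : EuclideanSpace ℝ (Fin dd) × EuclideanSpace ℝ (Fin kk) => g t p.1 p.2))
    (L : EuclideanSpace ℝ (Fin dd) → ℝ) (hL : Differentiable ℝ L)
    (R : EuclideanSpace ℝ (Fin kk) → ℝ) (hR : Differentiable ℝ R)
    (δ : ℝ)
    -- state trajectory as a function of the whole control sequence
    (X : (ℕ → EuclideanSpace ℝ (Fin kk)) → ℕ → EuclideanSpace ℝ (Fin dd))
    (hX0 : ∀ V, X V 0 = x₀)
    (hXs : ∀ V t, X V (t + 1) = g t (X V t) (V t))
    -- the objective
    (J : (ℕ → EuclideanSpace ℝ (Fin kk)) → ℝ)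
    (hJ : ∀ V, J V = L (X V T) + δ * ∑ t ∈ range T, R (V t))
    -- a fixed control sequence and the associated adjoint variables
    (W : ℕ → EuclideanSpace ℝ (Fin kk))
    (P : ℕ → EuclideanSpace ℝ (Fin dd))
    (hPT : P T = -gradient L (X W T))
    (hPs : ∀ t < T, P t =
      ContinuousLinearMap.adjoint (fderiv ℝ (fun x => g t x (W t)) (X W t)) (P (t + 1))) :
    ∀ t < T,
      gradient (fun w => J (Function.update W t w)) (W t)
        = -(ContinuousLinearMap.adjoint (fderiv ℝ (fun w => g t (X W t) w) (W t)) (P (t + 1))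
            - δ • gradient R (W t)) := by
  intro t ht
  have hJ_update : (fun w => J (update W t w)) = fun w =>
      (L ∘ fun w => X (update W t w) T) w + δ * ∑ s ∈ range T, R (update W t w s) :=
    funext fun w => hJ _
  have hL_grad : HasGradientAt L (-P T) (X (update W t (W t)) T) := by
    rw [update_eq_self, hPT, neg_neg]
    exact hL.differentiableAt.hasGradientAt
  have hX_deriv :=
    (differentiable_trajectory_update (W := W) (t := t) hX0 hXs hg T (W t)).hasFDerivAt
  have hR_sum :=
    hasGradientAt_sum_update (W := W) (mem_range.2 ht) hR.differentiableAt.hasGradientAt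
  have hJ_grad := (hL_grad.comp_hasFDerivAt (φ := fun w => X (update W t w) T) hX_deriv).add
    (hR_sum.const_mul δ)
  rw [hJ_update, hJ_grad.gradient, map_neg,
    adjoint_fderiv_trajectory_update_apply hX0 hXs hg ht hPs, neg_sub', sub_neg_eq_add]

/-- Discrete Pontryagin adjoint identity: for the discrete-time controlled system
`X₀ = x₀`, `X_{t+1} = g_t(X_t, W_t)` with objective
`J(W) = L(X_T) + δ Σ_{t<T} R(W_t)` and adjoint variables
`P_T = −∇L(X_T)`, `P_t = (D_x g_t(X_t,W_t))ᵀ P_{t+1}`, the partial gradient of `J`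
with respect to `W_t` equals `−((D_W g_t(X_t,W_t))ᵀ P_{t+1} − δ∇R(W_t))`, i.e.
`∇_{W_t} J = −∇_W H(t, X_t, P_{t+1}, W_t)` for the discrete Hamiltonian
`H(t,x,p,W) = p ⬝ g_t(x,W) − δ R(W)`. -/
theorem discrete_pmp_gradient {dd kk T : ℕ}
    (x₀ : EuclideanSpace ℝ (Fin dd))
    (g : ℕ → EuclideanSpace ℝ (Fin dd) → EuclideanSpace ℝ (Fin kk) → EuclideanSpace ℝ (Fin dd))
    (hg : ∀ t, Differentiable ℝ
      (fun p : EuclideanSpace ℝ (Fin dd) × EuclideanSpace ℝ (Fin kk) => g t p.1 p.2))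
    (L : EuclideanSpace ℝ (Fin dd) → ℝ) (hL : Differentiable ℝ L)
    (R : EuclideanSpace ℝ (Fin kk) → ℝ) (hR : Differentiable ℝ R)
    (δ : ℝ) (hδ : 0 ≤ δ)
    -- state trajectory as a function of the whole control sequence
    (X : (ℕ → EuclideanSpace ℝ (Fin kk)) → ℕ → EuclideanSpace ℝ (Fin dd))
    (hX0 : ∀ V, X V 0 = x₀)
    (hXs : ∀ V t, X V (t + 1) = g t (X V t) (V t))
    -- the objective
    (J : (ℕ → EuclideanSpace ℝ (Fin kk)) → ℝ)
    (hJ : ∀ V, J V = L (X V T) + δ * ∑ t ∈ range T, R (V t))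
    -- a fixed control sequence and the associated adjoint variables
    (W : ℕ → EuclideanSpace ℝ (Fin kk))
    (P : ℕ → EuclideanSpace ℝ (Fin dd))
    (hPT : P T = -gradient L (X W T))
    (hPs : ∀ t < T, P t =
      ContinuousLinearMap.adjoint (fderiv ℝ (fun x => g t x (W t)) (X W t)) (P (t + 1))) :
    ∀ t < T,
      gradient (fun w => J (Function.update W t w)) (W t)
        = -(ContinuousLinearMap.adjoint (fderiv ℝ (fun w => g t (X W t) w) (W t)) (P (t + 1))
            - δ • gradient R (W t)) :=
  discrete_pmp_gradient_general x₀ g hg L hL R hR δ X hX0 hXs J hJ W P hPT hPs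
end

section
/- Let S and C be nonempty types, N ∈ ℕ, x₀ ∈ S, and let g_t : S → C → S (t = 0,…,N−1) be deterministic transition maps, r_t : S → C → ℝ running costs, and L : S → ℝ a terminal cost. For an open-loop control sequence c = (c₀,…,c_{N−1}) ∈ C^N define trajectory s₀ = x₀, s_{t+1} = g_t(s_t)(c_t) and cost J_open(c) = Σ_{t<N} r_t(s_t)(c_t) + L(s_N). For a closed-loop policy μ = (μ₀,…,μ_{N−1}) with μ_t : S → C define trajectory s₀ = x₀, s_{t+1} = g_t(s_t)(μ_t(s_t)) and cost J_closed(μ) = Σ_{t<N} r_t(s_t)(μ_t(s_t)) + L(s_N). Then the infimum of J_open over all control sequences equals the infimum of J_closed over all policies. -/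
open Finset

/-- In a deterministic discrete-time finite-horizon control problem, the optimal value over
open-loop control sequences equals the optimal value over closed-loop (feedback) policies. -/
theorem open_loop_value_eq_closed_loop_value
    {S C : Type*} [Nonempty S] [Nonempty C] (N : ℕ) (x₀ : S)
    (g : ℕ → S → C → S) (r : ℕ → S → C → ℝ) (L : S → ℝ)
    -- open-loop trajectories: s₀ = x₀, s_{t+1} = g_t(s_t, c_t)
    (trajO : (ℕ → C) → ℕ → S)
    (htrajO0 : ∀ c, trajO c 0 = x₀)
    (htrajOs : ∀ c t, trajO c (t + 1) = g t (trajO c t) (c t))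
    -- closed-loop trajectories: s₀ = x₀, s_{t+1} = g_t(s_t, μ_t(s_t))
    (trajC : (ℕ → S → C) → ℕ → S)
    (htrajC0 : ∀ μ, trajC μ 0 = x₀)
    (htrajCs : ∀ μ t, trajC μ (t + 1) = g t (trajC μ t) (μ t (trajC μ t))) :
    (⨅ c : ℕ → C,
        (∑ t ∈ range N, r t (trajO c t) (c t)) + L (trajO c N))
      = ⨅ μ : ℕ → S → C,
        (∑ t ∈ range N, r t (trajC μ t) (μ t (trajC μ t))) + L (trajC μ N) := by
  have hOC : ∀ c : ℕ → C, ∀ t, trajO c t = trajC (fun t _ => c t) t := by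
    intro c t
    induction t with
    | zero => rw [htrajO0, htrajC0]
    | succ t ih => rw [htrajOs, htrajCs, ih]
  have hCO : ∀ μ : ℕ → S → C, ∀ t,
      trajC μ t = trajO (fun t => μ t (trajC μ t)) t := by
    intro μ t
    induction t with
    | zero => rw [htrajO0, htrajC0]
    | succ t ih => rw [htrajOs, htrajCs, ih]
  rw [iInf, iInf]
  congr 1
  ext x
  constructor
  · rintro ⟨c, rfl⟩
    refine ⟨fun t _ => c t, ?_⟩
    simp only [← hOC]
  · rintro ⟨μ, rfl⟩
    refine ⟨fun t => μ t (trajC μ t), ?_⟩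
    simp only [← hCO]
end
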